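/- Given a finite list Ps of static program over-approximations (the i-th over identifiers OId_i), applying the flow-sensitive residual construction consecutively — residual₂(D, ⟨⟩) = D and residual₂(D, P:Ps) = residual₂(residual₂(D, P), Ps) — yields a DATE equivalent to the original D with respect to the intersection of the projections of the approximations onto ground traces: residual₂(D, Ps) ≅_{⋂_{0 ≤ i < length(Ps)} Ps(i) ⇓ OId_i} D. -/

import Mathlib

open Classical

/-- A property automaton over states `Q` and alphabet `E`: a deterministic and
total transition relation is represented as a transition function. -/
structure PA (Q : Type*) (E : Type*) where
  init : Q
  bad : Set Q
  next : Q → E → Q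

namespace PA

variable {Q E : Type*}

/-- Iterated application of the transition function along a ground trace. -/
def run (π : PA Q E) (q : Q) (t : List E) : Q := t.foldl π.next q

/-- A ground trace satisfies a property automaton iff no prefix of it leads
from the initial state to a bad state. -/
def Sat (t : List E) (π : PA Q E) : Prop :=
  ∀ t' : List E, t' <+: t → π.run π.init t' ∉ π.bad

/-- Equivalence of two property automata with respect to a set of ground traces. -/
def EquivOn (T : Set (List E)) (π π' : PA Q E) : Prop :=
  ∀ t ∈ T, Sat t π ↔ Sat t π'

end PA

/-- A static program: a set of static parametrised traces over identifiers `α`,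
together with a must-alias equivalence relation and a may-alias relation. -/
structure SProg (α : Type*) (E : Type*) where
  traces : Set (List (α × E))
  must : α → α → Prop
  may : α → α → Prop
  must_equiv : Equivalence must
  must_sub_may : ∀ {x y : α}, must x y → may x y

namespace SProg

variable {α E : Type*}

-- Projection of a static parametrised trace onto an identifier `x`,
-- yielding the set of possible ground traces.
open Classical in
noncomputable def proj (P : SProg α E) (x : α) : List (α × E) → Set (List E)
  | [] => {[]}
  | (x', e) :: st =>
      if P.must x x' then (e :: ·) '' P.proj x st
      else if P.may x x' then P.proj x st ∪ (e :: ·) '' P.proj x st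
      else P.proj x st

/-- The projection of a static program onto a single identifier. -/
def projId (P : SProg α E) (x : α) : Set (List E) :=
  {t | ∃ st ∈ P.traces, t ∈ P.proj x st}

/-- The projection of a static program onto all identifiers (`P ⇓ OId`). -/
def projAll (P : SProg α E) : Set (List E) :=
  {t | ∃ st ∈ P.traces, ∃ x : α, t ∈ P.proj x st}

end SProg

/-- Satisfaction of a property automaton by a static parametrised trace:
every projection onto every identifier satisfies the automaton. -/
def PA.SSat {α Q E : Type*} (P : SProg α E) (st : List (α × E)) (π : PA Q E) : Prop :=
  ∀ x : α, ∀ t ∈ P.proj x st, PA.Sat t π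

/-- Equivalence of two property automata with respect to a static program. -/
def PA.SEquiv {α Q E : Type*} (P : SProg α E) (π π' : PA Q E) : Prop :=
  ∀ st ∈ P.traces, PA.SSat P st π ↔ PA.SSat P st π'

/-- A transition of a DATE: source state, event, condition, action, target state. -/
structure DTrans (Q : Type*) (E : Type*) (Θ : Type*) where
  src : Q
  ev : E
  cond : Θ → Bool
  act : Θ → Θ
  tgt : Q

/-- A DATE (without timers/channels): states `Q`, events `E`, monitoring
variable states `Θ`, initial state, initial monitoring state, bad states,
and a transition relation. -/
structure DATE (Q : Type*) (E : Type*) (Θ : Type*) where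
  init : Q
  th0 : Θ
  bad : Set Q
  delta : Set (DTrans Q E Θ)

namespace DATE

variable {Q E Θ : Type*}

/-- Determinism: from each state, any two distinct transitions with the same
event have conditions that are never simultaneously true. -/
def Deterministic (D : DATE Q E Θ) : Prop :=
  ∀ d ∈ D.delta, ∀ d' ∈ D.delta,
    d.src = d'.src → d.ev = d'.ev → d ≠ d' →
      ∀ θ : Θ, ¬(d.cond θ = true ∧ d'.cond θ = true)

/-- The concrete transition function `Δ`. -/
noncomputable def step (D : DATE Q E Θ) (s : Q × Θ) (e : E) : Q × Θ :=
  if h : ∃ d ∈ D.delta, d.src = s.1 ∧ d.ev = e ∧ d.cond s.2 = true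
  then (h.choose.tgt, h.choose.act s.2)
  else s

/-- `Δ*`: iterated concrete transition function along a ground trace. -/
noncomputable def run (D : DATE Q E Θ) (s : Q × Θ) (t : List E) : Q × Θ :=
  t.foldl D.step s

/-- A ground trace satisfies a DATE iff no prefix of it drives `Δ*` from the
initial configuration into a bad state. -/
def Sat (t : List E) (D : DATE Q E Θ) : Prop :=
  ∀ t' : List E, t' <+: t → (D.run (D.init, D.th0) t').1 ∉ D.bad

/-- Equivalence of two DATEs with respect to a set of ground traces. -/
def EquivOn (T : Set (List E)) (D D' : DATE Q E Θ) : Prop :=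
  ∀ t ∈ T, Sat t D ↔ Sat t D'

/-- The static transition relation `q →e_approx q'`. -/
def ApproxStep (D : DATE Q E Θ) (q : Q) (e : E) (q' : Q) : Prop :=
  (∃ d ∈ D.delta, d.src = q ∧ d.ev = e ∧ d.tgt = q' ∧ ¬ ∀ θ : Θ, d.cond θ = false)
  ∨ (q' = q ∧ ¬ ∃ d ∈ D.delta, d.src = q ∧ d.ev = e ∧ d.tgt ≠ q ∧ ∀ θ : Θ, d.cond θ = true)

/-- The static transition function on sets of states. -/
def approxSet (D : DATE Q E Θ) (S : Set Q) (e : E) : Set Q :=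
  {q' | ∃ q ∈ S, D.ApproxStep q e q'}

/-- `approxΔ*`: iterated static transition function along a ground trace. -/
def approxRun (D : DATE Q E Θ) (S : Set Q) (t : List E) : Set Q :=
  t.foldl D.approxSet S

/-- `q ↪ q'`: `q'` is reachable from `q` via the static transition relation. -/
def Reach (D : DATE Q E Θ) (q q' : Q) : Prop :=
  ∃ t : List E, q' ∈ D.approxRun {q} t

/-- `badAfter(q)`: `q` is reachable from the initial state and can reach a bad state. -/
def BadAfter (D : DATE Q E Θ) (q : Q) : Prop :=
  D.Reach D.init q ∧ ∃ q' ∈ D.bad, D.Reach q q'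

/-- `goodEntryPoint(q)`. -/
def GoodEntryPoint (D : DATE Q E Θ) (q : Q) : Prop :=
  ¬ D.BadAfter q ∧ ∃ q' : Q, ∃ e : E, D.BadAfter q' ∧ D.ApproxStep q' e q

/-- `useful(q)`. -/
def Useful (D : DATE Q E Θ) (q : Q) : Prop :=
  D.BadAfter q ∨ D.GoodEntryPoint q

/-- Restriction of a DATE to a set of transitions (`D ↾ δ'`). -/
def restrict (D : DATE Q E Θ) (δ' : Set (DTrans Q E Θ)) : DATE Q E Θ :=
  { D with delta := D.delta ∩ δ' }

/-- The reachability-reduced DATE `reach(D)`: only useful states and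
transitions between useful states are kept. -/
def reachReduce (D : DATE Q E Θ) : DATE Q E Θ :=
  D.restrict {d | D.Useful d.src ∧ D.Useful d.tgt}

/-- Alphabet restriction `D ↾ Σ'`. -/
def alphaRestrict (D : DATE Q E Θ) (A : Set E) : DATE Q E Θ :=
  D.restrict {d | d.ev ∈ A}

/-- `Σ(T)`: the set of events occurring in some trace of `T`. -/
def eventsOf (T : Set (List E)) : Set E :=
  {e | ∃ t ∈ T, e ∈ t}

/-- Component-wise union of two DATEs (sharing initial state and initial
monitoring state). -/
def union (D₁ D₂ : DATE Q E Θ) : DATE Q E Θ :=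
  { init := D₁.init, th0 := D₁.th0, bad := D₁.bad ∪ D₂.bad,
    delta := D₁.delta ∪ D₂.delta }

/-- Component-wise union of a family of DATEs, with given initial state and
initial monitoring state. -/
def unionFamily {ι : Type*} (q0 : Q) (θ0 : Θ) (f : ι → DATE Q E Θ) : DATE Q E Θ :=
  { init := q0, th0 := θ0, bad := ⋃ i, (f i).bad, delta := ⋃ i, (f i).delta }

/-- A ground trace `t` uses a transition `d`. -/
def Uses (D : DATE Q E Θ) (t : List E) (d : DTrans Q E Θ) : Prop :=
  (¬ ∀ θ : Θ, d.cond θ = false) ∧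
    ∃ t' : List E, (t' ++ [d.ev]) <+: t ∧ d.src ∈ D.approxRun {D.init} t'

/-- Satisfaction of a DATE by a static parametrised trace. -/
def SSat {α : Type*} (P : SProg α E) (st : List (α × E)) (D : DATE Q E Θ) : Prop :=
  ∀ x : α, ∀ t ∈ P.proj x st, Sat t D

/-- Equivalence of two DATEs with respect to a static program. -/
def SEquiv {α : Type*} (P : SProg α E) (D D' : DATE Q E Θ) : Prop :=
  ∀ st ∈ P.traces, SSat P st D ↔ SSat P st D'

end DATE

/-- Translation of a property automaton into a DATE with `Θ = Unit`:
each transition `(q, e, q')` becomes `q —e|true↦skip→ q'`. -/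
def PA.toDATE {Q E : Type*} (π : PA Q E) : DATE Q E Unit :=
  { init := π.init, th0 := (), bad := π.bad,
    delta := {d | d.cond = (fun _ => true) ∧ d.act = id ∧ d.tgt = π.next d.src d.ev} }

/-- The flow-sensitive residual `residual₂(D, P)`. -/
def DATE.residual2 {α Q E Θ : Type*} (D : DATE Q E Θ) (P : SProg α E) : DATE Q E Θ :=
  (D.restrict {d | ∃ t ∈ P.projAll, D.Uses t d}).reachReduce

/-- Consecutive application of the flow-sensitive residual over a list of
static program over-approximations. -/
def DATE.residual2List {α Q E Θ : Type*} (D : DATE Q E Θ) :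
    List (SProg α E) → DATE Q E Θ
  | [] => D
  | P :: Ps => DATE.residual2List (D.residual2 P) Ps

/-!
A transition that is dropped by `residual₂` can only matter on a ground trace if it is
enabled there. For a trace in `P ⇓ OId`, every transition enabled along its concrete run is
used by that trace, because the concrete run stays inside `approxΔ*`; so the first restriction
does not change the run at all. The reachability reduction drops an enabled transition only
at a reachable configuration from which no bad state is statically reachable; from then on
both runs remain among states statically reachable from there, so neither can become bad.
Determinism makes the choice of transition in `Δ` independent of which other transitions are
present, so before the first dropped enabled transition the two runs coincide.
-/

namespace DATE

variable {Q E Θ : Type*} (D : DATE Q E Θ)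

def CanReachBad (q : Q) : Prop :=
  ∃ q' ∈ D.bad, D.Reach q q'

variable {D}

theorem Deterministic.restrict (hdet : D.Deterministic) (δ' : Set (DTrans Q E Θ)) :
    (D.restrict δ').Deterministic :=
  fun d hd d' hd' => hdet d hd.1 d' hd'.1

theorem run_append_singleton (s : Q × Θ) (t : List E) (e : E) :
    D.run s (t ++ [e]) = D.step (D.run s t) e := by
  simp [DATE.run, List.foldl_append]

theorem approxRun_mono (t : List E) {S S' : Set Q} (h : S ⊆ S') :
    D.approxRun S t ⊆ D.approxRun S' t := by
  induction t generalizing S S' with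
  | nil => exact h
  | cons e t ih => exact ih fun q' ⟨q, hq, hstep⟩ => ⟨q, h hq, hstep⟩

theorem Reach.refl (q : Q) : D.Reach q q :=
  ⟨[], rfl⟩

theorem Reach.trans {q q' q'' : Q} (h₁ : D.Reach q q') (h₂ : D.Reach q' q'') :
    D.Reach q q'' := by
  obtain ⟨t₁, m₁⟩ := h₁
  obtain ⟨t₂, m₂⟩ := h₂
  refine ⟨t₁ ++ t₂, ?_⟩
  rw [approxRun, List.foldl_append]
  exact approxRun_mono t₂ (Set.singleton_subset_iff.2 m₁) m₂

theorem ApproxStep.reach {q q' : Q} {e : E} (h : D.ApproxStep q e q') : D.Reach q q' :=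
  ⟨[e], ⟨q, rfl, h⟩⟩

theorem ApproxStep.reach_of_restrict {δ' : Set (DTrans Q E Θ)} {q q' : Q} {e : E}
    (h : (D.restrict δ').ApproxStep q e q') : D.Reach q q' := by
  rcases h with ⟨d, hd, hstep⟩ | ⟨rfl, -⟩
  · exact ApproxStep.reach (Or.inl ⟨d, hd.1, hstep⟩)
  · exact Reach.refl _

theorem CanReachBad.of_reach {q q' : Q} (h : D.Reach q q') (hq' : D.CanReachBad q') :
    D.CanReachBad q :=
  let ⟨b, hb, hreach⟩ := hq'
  ⟨b, hb, h.trans hreach⟩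

theorem approxStep_step (s : Q × Θ) (e : E) : D.ApproxStep s.1 e (D.step s e).1 := by
  unfold step
  split_ifs with h
  · obtain ⟨hd, hsrc, hev, hcond⟩ := h.choose_spec
    exact Or.inl ⟨h.choose, hd, hsrc, hev, rfl, fun hfalse => by simp [hfalse] at hcond⟩
  · exact Or.inr ⟨rfl, fun ⟨d, hd, hsrc, hev, _, htrue⟩ => h ⟨d, hd, hsrc, hev, htrue s.2⟩⟩

theorem run_fst_mem_approxRun (t : List E) {S : Set Q} {s : Q × Θ} (hs : s.1 ∈ S) :
    (D.run s t).1 ∈ D.approxRun S t := by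
  induction t generalizing S s with
  | nil => exact hs
  | cons e t ih => exact ih ⟨s.1, hs, approxStep_step s e⟩

theorem reach_init_run (t : List E) : D.Reach D.init (D.run (D.init, D.th0) t).1 :=
  ⟨t, run_fst_mem_approxRun t rfl⟩

theorem step_restrict_eq (hdet : D.Deterministic) {δ' : Set (DTrans Q E Θ)} {s : Q × Θ}
    {e : E} (hkeep : ∀ d ∈ D.delta, d.src = s.1 → d.ev = e → d.cond s.2 = true → d ∈ δ') :
    (D.restrict δ').step s e = D.step s e := by
  unfold step
  by_cases h : ∃ d ∈ D.delta, d.src = s.1 ∧ d.ev = e ∧ d.cond s.2 = true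
  · obtain ⟨hd, hsrc, hev, hcond⟩ := h.choose_spec
    have h' : ∃ d ∈ (D.restrict δ').delta, d.src = s.1 ∧ d.ev = e ∧ d.cond s.2 = true :=
      ⟨h.choose, ⟨hd, hkeep _ hd hsrc hev hcond⟩, hsrc, hev, hcond⟩
    obtain ⟨hd', hsrc', hev', hcond'⟩ := h'.choose_spec
    have hchoose : h'.choose = h.choose := by
      by_contra hne
      exact hdet _ hd'.1 _ hd (hsrc'.trans hsrc.symm) (hev'.trans hev.symm) hne s.2
        ⟨hcond', hcond⟩
    rw [dif_pos h, dif_pos h', hchoose]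
  · have h' : ¬ ∃ d ∈ (D.restrict δ').delta, d.src = s.1 ∧ d.ev = e ∧ d.cond s.2 = true :=
      fun ⟨d, hd, hp⟩ => h ⟨d, hd.1, hp⟩
    rw [dif_neg h, dif_neg h']

theorem sat_restrict_iff (hdet : D.Deterministic) {δ' : Set (DTrans Q E Θ)} {t : List E}
    (hkeep : ∀ t' e, t' ++ [e] <+: t → ∀ d ∈ D.delta,
      d.src = (D.run (D.init, D.th0) t').1 → d.ev = e → d.cond (D.run (D.init, D.th0) t').2 →
        d ∈ δ' ∨ ¬ D.CanReachBad (D.run (D.init, D.th0) t').1) :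
    Sat t (D.restrict δ') ↔ Sat t D := by
  set s₀ : Q × Θ := (D.init, D.th0)
  have agree : ∀ t' : List E, t' <+: t → (D.restrict δ').run s₀ t' = D.run s₀ t' ∨
      (¬ D.CanReachBad ((D.restrict δ').run s₀ t').1 ∧ ¬ D.CanReachBad (D.run s₀ t').1) := by
    intro t'
    induction t' using List.reverseRecOn with
    | nil => exact fun _ => Or.inl rfl
    | append_singleton t' e ih =>
      intro hpre
      rw [run_append_singleton, run_append_singleton]
      rcases ih ((List.prefix_append t' [e]).trans hpre) with heq | ⟨hsafe', hsafe⟩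
      · rw [heq]
        by_cases hall : ∀ d ∈ D.delta, d.src = (D.run s₀ t').1 → d.ev = e →
            d.cond (D.run s₀ t').2 = true → d ∈ δ'
        · exact Or.inl (step_restrict_eq hdet hall)
        · push Not at hall
          obtain ⟨d, hd, hsrc, hev, hcond, hdrop⟩ := hall
          have hsafe := (hkeep t' e hpre d hd hsrc hev hcond).resolve_left hdrop
          exact Or.inr ⟨mt (CanReachBad.of_reach (approxStep_step _ e).reach_of_restrict) hsafe,
            mt (CanReachBad.of_reach (approxStep_step _ e).reach) hsafe⟩
      · exact Or.inr ⟨mt (CanReachBad.of_reach (approxStep_step _ e).reach_of_restrict) hsafe',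
          mt (CanReachBad.of_reach (approxStep_step _ e).reach) hsafe⟩
  refine forall₂_congr fun t' ht' => not_congr ?_
  rcases agree t' ht' with heq | ⟨hsafe', hsafe⟩
  · exact heq ▸ Iff.rfl
  · exact iff_of_false (fun hb => hsafe' ⟨_, hb, Reach.refl _⟩)
      (fun hb => hsafe ⟨_, hb, Reach.refl _⟩)

theorem uses_of_enabled {t t' : List E} {e : E} (hpre : t' ++ [e] <+: t)
    {d : DTrans Q E Θ} (hsrc : d.src = (D.run (D.init, D.th0) t').1) (hev : d.ev = e)
    (hcond : d.cond (D.run (D.init, D.th0) t').2 = true) : D.Uses t d :=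
  ⟨fun hfalse => by simp [hfalse] at hcond, t', hev ▸ hpre,
    hsrc ▸ run_fst_mem_approxRun t' rfl⟩

theorem useful_of_enabled {d : DTrans Q E Θ} (hd : d ∈ D.delta) {θ : Θ}
    (hcond : d.cond θ = true) (hreach : D.Reach D.init d.src) (hbad : D.CanReachBad d.src) :
    D.Useful d.src ∧ D.Useful d.tgt := by
  have hsrc : D.BadAfter d.src := ⟨hreach, hbad⟩
  refine ⟨Or.inl hsrc, or_iff_not_imp_left.2 fun htgt => ⟨htgt, d.src, d.ev, hsrc, ?_⟩⟩
  exact Or.inl ⟨d, hd, rfl, rfl, rfl, fun hfalse => by simp [hfalse] at hcond⟩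

theorem sat_reachReduce_iff (hdet : D.Deterministic) (t : List E) :
    Sat t D.reachReduce ↔ Sat t D :=
  sat_restrict_iff hdet fun t' _ _ _ hd hsrc _ hcond =>
    or_iff_not_imp_right.2 fun hbad =>
      useful_of_enabled hd hcond (hsrc ▸ reach_init_run t') (hsrc ▸ not_not.1 hbad)

theorem sat_restrict_uses_iff {α : Type*} (hdet : D.Deterministic) {P : SProg α E}
    {t : List E} (ht : t ∈ P.projAll) :
    Sat t (D.restrict {d | ∃ u ∈ P.projAll, D.Uses u d}) ↔ Sat t D :=
  sat_restrict_iff hdet fun _ _ hpre _ _ hsrc hev hcond =>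
    Or.inl ⟨t, ht, uses_of_enabled hpre hsrc hev hcond⟩

theorem sat_residual2_iff {α : Type*} (hdet : D.Deterministic) {P : SProg α E}
    {t : List E} (ht : t ∈ P.projAll) : Sat t (D.residual2 P) ↔ Sat t D :=
  (sat_reachReduce_iff (hdet.restrict _) t).trans (sat_restrict_uses_iff hdet ht)

end DATE

theorem List.mem_iInter_get_cons {β γ : Type*} (f : β → Set γ) (b : β) (bs : List β) (x : γ) :
    x ∈ ⋂ i : Fin (b :: bs).length, f ((b :: bs).get i) ↔
      x ∈ f b ∧ x ∈ ⋂ i : Fin bs.length, f (bs.get i) := by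
  simp only [Set.mem_iInter, List.length_cons, Fin.forall_fin_succ, List.get_eq_getElem,
    Fin.val_zero, List.getElem_cons_zero, Fin.val_succ, List.getElem_cons_succ]

/-- Consecutively applying the flow-sensitive residual
construction along a finite list of static program over-approximations yields
a DATE equivalent to the original with respect to the intersection of the
projections of the approximations onto ground traces. -/
theorem residual2List_equiv {α Q E Θ : Type*} (D : DATE Q E Θ)
    (hdet : D.Deterministic) (Ps : List (SProg α E)) :
    DATE.EquivOn (⋂ i : Fin Ps.length, (Ps.get i).projAll)
      (D.residual2List Ps) D := by
  induction Ps generalizing D with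
  | nil => exact fun _ _ => Iff.rfl
  | cons P Ps ih =>
    intro t ht
    obtain ⟨htP, htPs⟩ := (List.mem_iInter_get_cons SProg.projAll P Ps t).1 ht
    exact (ih _ ((hdet.restrict _).restrict _) t htPs).trans (DATE.sat_residual2_iff hdet htP)
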